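/- Leave-one-out lemma for linear smoothers with two data channels: fix i, and suppose f̂^{(−i)} minimizes the V-spline objective with the i-th position and velocity terms deleted. Define y* by y*_j = y_j for j ≠ i and y*_i = f̂^{(−i)}(t_i), and v* by v*_j = v_j for j ≠ i and v*_i = f̂'^{(−i)}(t_i). Then f̂^{(−i)} is also the minimizer of the full V-spline objective with data (y*, v*); consequently its fitted values satisfy f̂^{(−i)} = S y* + γ T v* and f̂'^{(−i)} = U y* + γ V v*. -/

import Mathlib

open intervalIntegral Matrix

/-!
Replacing the deleted data by the leave-one-out fit's own values at `t i` turns the full objective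
into the deleted one plus `(1/n) (f̂(tᵢ) - g(tᵢ))² + (γ/n) (f̂'(tᵢ) - g'(tᵢ))²`. This extra term is
nonnegative and vanishes at `f̂`, so `f̂` still minimizes, and the smoother representation applies.
-/

theorem Finset.sum_eq_add_sum_erase_of_eq_ite {ι α M : Type*} [Fintype ι] [DecidableEq ι]
    [AddCommMonoid M] (F : ι → α → M) {i : ι} {c : α} {y Y : ι → α}
    (hY : ∀ j, Y j = if j = i then c else y j) :
    ∑ j, F j (Y j) = F i c + ∑ j ∈ univ.erase i, F j (y j) := by
  rw [← add_sum_erase univ _ (mem_univ i), hY i, if_pos rfl]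
  congr 1
  exact sum_congr rfl fun j hj => by rw [hY j, if_neg (ne_of_mem_erase hj)]

theorem forall_le_of_eq_add_of_nonneg {α M : Type*} [AddCommMonoid M] [PartialOrder M]
    [IsOrderedAddMonoid M] {F G P : α → M} {x : α} (hG : ∀ g, G g = F g + P g)
    (hF : ∀ g, F x ≤ F g) (hP : ∀ g, 0 ≤ P g) (hPx : P x = 0) :
    ∀ g, G x ≤ G g := fun g => by
  rw [hG, hG, hPx, add_zero]
  exact le_add_of_le_of_nonneg (hF g) (hP g)

theorem leave_one_out_lemma_general
    (n : ℕ) (a b : ℝ) (t : Fin n → ℝ)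
    (y v : Fin n → ℝ) (γ : ℝ) (hγ : 0 < γ)
    (lam : ℝ → ℝ)
    (i : Fin n)
    (J : (Fin n → ℝ) → (Fin n → ℝ) → (ℝ → ℝ) → ℝ)
    (hJ : ∀ Y V f, J Y V f =
      (1/(n:ℝ)) * ∑ j, (Y j - f (t j))^2
      + (γ/(n:ℝ)) * ∑ j, (V j - deriv f (t j))^2
      + ∫ s in a..b, lam s * (deriv (deriv f) s)^2)
    (Jdel : (ℝ → ℝ) → ℝ)
    (hJdel : ∀ f, Jdel f =
      (1/(n:ℝ)) * ∑ j ∈ Finset.univ.erase i, (y j - f (t j))^2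
      + (γ/(n:ℝ)) * ∑ j ∈ Finset.univ.erase i, (v j - deriv f (t j))^2
      + ∫ s in a..b, lam s * (deriv (deriv f) s)^2)
    (fhat : ℝ → ℝ)
    (hmin : ∀ g : ℝ → ℝ, Jdel fhat ≤ Jdel g)
    (ystar vstar : Fin n → ℝ)
    (hystar : ∀ j, ystar j = if j = i then fhat (t i) else y j)
    (hvstar : ∀ j, vstar j = if j = i then deriv fhat (t i) else v j)
    (Sm Tm Um Vm : Matrix (Fin n) (Fin n) ℝ)
    (hsmoother : ∀ (Y V : Fin n → ℝ) (g : ℝ → ℝ),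
      (∀ g' : ℝ → ℝ, J Y V g ≤ J Y V g') →
      (∀ j, g (t j) = (Sm *ᵥ Y + γ • (Tm *ᵥ V)) j) ∧
      (∀ j, deriv g (t j) = (Um *ᵥ Y + γ • (Vm *ᵥ V)) j)) :
    (∀ g : ℝ → ℝ, J ystar vstar fhat ≤ J ystar vstar g) ∧
    (∀ j, fhat (t j) = (Sm *ᵥ ystar + γ • (Tm *ᵥ vstar)) j) ∧
    (∀ j, deriv fhat (t j) = (Um *ᵥ ystar + γ • (Vm *ᵥ vstar)) j) := by
  have hsplit : ∀ g : ℝ → ℝ, J ystar vstar g = Jdel g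
      + ((1/(n:ℝ)) * (fhat (t i) - g (t i))^2
        + (γ/(n:ℝ)) * (deriv fhat (t i) - deriv g (t i))^2) := fun g => by
    rw [hJ, hJdel,
      Finset.sum_eq_add_sum_erase_of_eq_ite (fun j c => (c - g (t j))^2) hystar,
      Finset.sum_eq_add_sum_erase_of_eq_ite (fun j c => (c - deriv g (t j))^2) hvstar]
    ring
  have hfull : ∀ g : ℝ → ℝ, J ystar vstar fhat ≤ J ystar vstar g :=
    forall_le_of_eq_add_of_nonneg hsplit hmin (fun g => by positivity) (by simp)
  exact ⟨hfull, hsmoother ystar vstar fhat hfull⟩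

theorem leave_one_out_lemma
    (n : ℕ) (hn : 1 ≤ n) (a b : ℝ) (t : Fin n → ℝ)
    (y v : Fin n → ℝ) (γ : ℝ) (hγ : 0 < γ)
    (lam : ℝ → ℝ) (hlam : ∀ s, 0 < lam s)
    (i : Fin n)
    (J : (Fin n → ℝ) → (Fin n → ℝ) → (ℝ → ℝ) → ℝ)
    (hJ : ∀ Y V f, J Y V f =
      (1/(n:ℝ)) * ∑ j, (Y j - f (t j))^2
      + (γ/(n:ℝ)) * ∑ j, (V j - deriv f (t j))^2
      + ∫ s in a..b, lam s * (deriv (deriv f) s)^2)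
    (Jdel : (ℝ → ℝ) → ℝ)
    (hJdel : ∀ f, Jdel f =
      (1/(n:ℝ)) * ∑ j ∈ Finset.univ.erase i, (y j - f (t j))^2
      + (γ/(n:ℝ)) * ∑ j ∈ Finset.univ.erase i, (v j - deriv f (t j))^2
      + ∫ s in a..b, lam s * (deriv (deriv f) s)^2)
    (fhat : ℝ → ℝ)
    (hmin : ∀ g : ℝ → ℝ, Jdel fhat ≤ Jdel g)
    (ystar vstar : Fin n → ℝ)
    (hystar : ∀ j, ystar j = if j = i then fhat (t i) else y j)
    (hvstar : ∀ j, vstar j = if j = i then deriv fhat (t i) else v j)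
    (Sm Tm Um Vm : Matrix (Fin n) (Fin n) ℝ)
    (hsmoother : ∀ (Y V : Fin n → ℝ) (g : ℝ → ℝ),
      (∀ g' : ℝ → ℝ, J Y V g ≤ J Y V g') →
      (∀ j, g (t j) = (Sm *ᵥ Y + γ • (Tm *ᵥ V)) j) ∧
      (∀ j, deriv g (t j) = (Um *ᵥ Y + γ • (Vm *ᵥ V)) j)) :
    (∀ g : ℝ → ℝ, J ystar vstar fhat ≤ J ystar vstar g) ∧
    (∀ j, fhat (t j) = (Sm *ᵥ ystar + γ • (Tm *ᵥ vstar)) j) ∧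
    (∀ j, deriv fhat (t j) = (Um *ᵥ ystar + γ • (Vm *ᵥ vstar)) j) :=
  leave_one_out_lemma_general n a b t y v γ hγ lam i J hJ Jdel hJdel fhat hmin ystar vstar hystar
    hvstar Sm Tm Um Vm hsmoother
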